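/- arXiv:2210.08717 — 3 statements merged into one kernel-verified Lean document; each statement's English description precedes it below -/
import Mathlib

section
/- Given real numbers a_1,...,a_n and b_1,...,b_n with all a_i, b_i > 0, if the sequence a_i/b_i is strictly increasing in i, then the sequence z_i = (Σ_{j=i}^n a_j) / (Σ_{j=i}^n b_j) is strictly increasing in i. -/
/-!
For `j > i` every ratio `a j / b j` exceeds `a i / b i`, hence so does the ratio of the tail
sums over `j > i`. The ratio of the sums from `i` on is the mediant of `a i / b i` and that
tail ratio, so it lies strictly below the tail ratio.
-/

open Finset

/-- BRAVO likelihood ratio. -/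
noncomputable def sigmaRatio (k n : ℕ) (pa p0 : ℝ) : ℝ :=
  (pa ^ k * (1 - pa) ^ (n - k)) / (p0 ^ k * (1 - p0) ^ (n - k))

/-- Binomial pmf. -/
noncomputable def binPMF (n k : ℕ) (p : ℝ) : ℝ :=
  (n.choose k : ℝ) * p ^ k * (1 - p) ^ (n - k)

/-- Upper tail of the binomial distribution. -/
noncomputable def binTail (k n : ℕ) (p : ℝ) : ℝ :=
  ∑ i ∈ Finset.Icc k n, binPMF n i p

/-- MINERVA/PROVIDENCE first-round tail ratio. -/
noncomputable def tau1 (k n : ℕ) (pa p0 : ℝ) : ℝ :=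
  binTail k n pa / binTail k n p0

section Mediant

variable {𝕜 : Type*} [Field 𝕜] [LinearOrder 𝕜] [IsStrictOrderedRing 𝕜]

theorem add_div_add_lt_div_of_div_lt_div {x y X Y : 𝕜} (hy : 0 < y) (hY : 0 < Y)
    (h : x / y < X / Y) : (x + X) / (y + Y) < X / Y := by
  rw [div_lt_div_iff₀ hy hY] at h
  rw [div_lt_div_iff₀ (add_pos hy hY) hY]
  linarith

theorem Finset.lt_sum_div_sum {ι : Type*} {s : Finset ι} {f g : ι → 𝕜} {r : 𝕜}
    (hs : s.Nonempty) (hg : ∀ i ∈ s, 0 < g i) (hr : ∀ i ∈ s, r < f i / g i) :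
    r < (∑ i ∈ s, f i) / ∑ i ∈ s, g i := by
  rw [lt_div_iff₀ (sum_pos hg hs), mul_sum]
  exact sum_lt_sum_of_nonempty hs fun i hi => (lt_div_iff₀ (hg i hi)).1 (hr i hi)

end Mediant

theorem stmt_2_general (n : ℕ) (a b : ℕ → ℝ)
    (hb : ∀ i ∈ Finset.Icc 1 n, 0 < b i)
    (hmono : ∀ i, 1 ≤ i → i < n → a i / b i < a (i + 1) / b (i + 1)) :
    ∀ i, 1 ≤ i → i < n →
      (∑ j ∈ Finset.Icc i n, a j) / (∑ j ∈ Finset.Icc i n, b j) <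
      (∑ j ∈ Finset.Icc (i + 1) n, a j) / (∑ j ∈ Finset.Icc (i + 1) n, b j) := by
  intro i hi hin
  have hratio : StrictMonoOn (fun j => a j / b j) (Set.Icc 1 n) :=
    strictMonoOn_of_lt_add_one Set.ordConnected_Icc fun j _ hj hj' => hmono j hj.1 hj'.2
  have htail : (Icc (i + 1) n).Nonempty := nonempty_Icc.2 hin
  have htail_sub : Icc (i + 1) n ⊆ Icc 1 n := Icc_subset_Icc (by omega) le_rfl
  have hb_tail : ∀ j ∈ Icc (i + 1) n, 0 < b j := fun j hj => hb j (htail_sub hj)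
  have hi_mem : i ∈ Icc 1 n := mem_Icc.2 ⟨hi, hin.le⟩
  have hlt_tail : a i / b i < (∑ j ∈ Icc (i + 1) n, a j) / ∑ j ∈ Icc (i + 1) n, b j :=
    lt_sum_div_sum htail hb_tail fun j hj =>
      hratio (mem_Icc.1 hi_mem) (mem_Icc.1 (htail_sub hj)) (mem_Icc.1 hj).1
  rw [← insert_Icc_add_one_left_eq_Icc hin.le, sum_insert (by simp), sum_insert (by simp)]
  exact add_div_add_lt_div_of_div_lt_div (hb i hi_mem) (sum_pos hb_tail htail) hlt_tail

theorem stmt_2 (n : ℕ) (a b : ℕ → ℝ)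
    (ha : ∀ i ∈ Finset.Icc 1 n, 0 < a i) (hb : ∀ i ∈ Finset.Icc 1 n, 0 < b i)
    (hmono : ∀ i, 1 ≤ i → i < n → a i / b i < a (i + 1) / b (i + 1)) :
    ∀ i, 1 ≤ i → i < n →
      (∑ j ∈ Finset.Icc i n, a j) / (∑ j ∈ Finset.Icc i n, b j) <
      (∑ j ∈ Finset.Icc (i + 1) n, a j) / (∑ j ∈ Finset.Icc (i + 1) n, b j) :=
  stmt_2_general n a b hb hmono
end

section
/- For 0 < p_0 < p_a < 1 and n > 0, the tail ratio τ_1(k) = (Σ_{i=k}^n C(n,i) p_a^i (1-p_a)^{n-i}) / (Σ_{i=k}^n C(n,i) p_0^i (1-p_0)^{n-i}) is strictly increasing as a function of k for 0 ≤ k ≤ n. -/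
/-
Monotone likelihood ratio. For `i ≤ n` the ratio of the two binomial pmfs at `i` is
`((1 - pa) / (1 - p0)) ^ n * θ ^ i` with odds ratio `θ = pa (1 - p0) / (p0 (1 - pa)) > 1`, so it
increases strictly with `i`. Passing from the tail `[k, n]` to `[k + 1, n]` drops the term of
smallest ratio, and a mediant argument shows that this strictly raises the ratio of the two sums.
-/

open Finset

theorem sum_Icc_div_sum_Icc_lt_succ {f g : ℕ → ℝ} {k n : ℕ} (hk : k < n)
    (hg : ∀ i ∈ Icc k n, 0 < g i) (hfg : StrictMonoOn (fun i ↦ f i / g i) (Set.Icc k n)) :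
    (∑ i ∈ Icc k n, f i) / ∑ i ∈ Icc k n, g i <
      (∑ i ∈ Icc (k + 1) n, f i) / ∑ i ∈ Icc (k + 1) n, g i := by
  have hsplit (h : ℕ → ℝ) : ∑ i ∈ Icc k n, h i = h k + ∑ i ∈ Icc (k + 1) n, h i := by
    rw [Icc_add_one_left_eq_Ioc, ← Ioc_insert_left hk.le, sum_insert left_notMem_Ioc]
  have hgk : 0 < g k := hg k (left_mem_Icc.2 hk.le)
  have hD : 0 < ∑ i ∈ Icc (k + 1) n, g i :=
    sum_pos (fun i hi ↦ hg i (Icc_subset_Icc_left k.le_succ hi)) ⟨k + 1, left_mem_Icc.2 hk⟩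
  have hcross : f k * ∑ i ∈ Icc (k + 1) n, g i < (∑ i ∈ Icc (k + 1) n, f i) * g k := by
    rw [mul_sum, sum_mul]
    refine sum_lt_sum_of_nonempty ⟨k + 1, left_mem_Icc.2 hk⟩ fun i hi ↦ ?_
    obtain ⟨hki, hin⟩ : k < i ∧ i ≤ n := mem_Icc.1 hi
    have := hfg ⟨le_rfl, hk.le⟩ ⟨hki.le, hin⟩ hki
    rwa [div_lt_div_iff₀ hgk (hg i (mem_Icc.2 ⟨hki.le, hin⟩))] at this
  -- the mediant `(a + b) / (c + d)` lies below `b / d` exactly when `a / c` does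
  rw [hsplit f, hsplit g, div_lt_div_iff₀ (by positivity) hD]
  linarith

theorem binPMF_pos {p : ℝ} (hp0 : 0 < p) (hp1 : p < 1) {n k : ℕ} (hk : k ≤ n) :
    0 < binPMF n k p := by
  have : (0 : ℝ) < 1 - p := by linarith
  have := Nat.choose_pos hk
  unfold binPMF
  positivity

theorem sigmaRatio_eq_mul_pow {p0 pa : ℝ} (hp0 : p0 ≠ 0) (hq0 : 1 - p0 ≠ 0) (hqa : 1 - pa ≠ 0)
    {k n : ℕ} (hk : k ≤ n) :
    sigmaRatio k n pa p0 =
      ((1 - pa) / (1 - p0)) ^ n * (pa * (1 - p0) / (p0 * (1 - pa))) ^ k := by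
  obtain ⟨m, rfl⟩ := Nat.exists_eq_add_of_le hk
  rw [sigmaRatio, Nat.add_sub_cancel_left, div_pow, div_pow, mul_pow, mul_pow, pow_add]
  field_simp
  ring

theorem sigmaRatio_strictMonoOn {p0 pa : ℝ} (h0 : 0 < p0) (h1 : p0 < pa) (h2 : pa < 1) (n : ℕ) :
    StrictMonoOn (fun k ↦ sigmaRatio k n pa p0) (Set.Icc 0 n) := by
  have hθ : 1 < pa * (1 - p0) / (p0 * (1 - pa)) := by
    rw [one_lt_div (mul_pos h0 (by linarith))]
    nlinarith
  intro a ha b hb hab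
  dsimp only
  rw [sigmaRatio_eq_mul_pow h0.ne' (by linarith) (by linarith) ha.2,
    sigmaRatio_eq_mul_pow h0.ne' (by linarith) (by linarith) hb.2]
  have : 0 < (1 - pa) / (1 - p0) := div_pos (by linarith) (by linarith)
  gcongr

theorem binPMF_div_binPMF {p0 pa : ℝ} {k n : ℕ} (hk : k ≤ n) :
    binPMF n k pa / binPMF n k p0 = sigmaRatio k n pa p0 := by
  simp only [binPMF, sigmaRatio, mul_assoc]
  exact mul_div_mul_left _ _ (Nat.cast_ne_zero.2 (Nat.choose_pos hk).ne')

theorem tau1_lt_tau1_succ {p0 pa : ℝ} (h0 : 0 < p0) (h1 : p0 < pa) (h2 : pa < 1) {k n : ℕ}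
    (hk : k < n) : tau1 k n pa p0 < tau1 (k + 1) n pa p0 := by
  refine sum_Icc_div_sum_Icc_lt_succ hk
    (fun i hi ↦ binPMF_pos h0 (h1.trans h2) (mem_Icc.1 hi).2) fun a ha b hb hab ↦ ?_
  dsimp only
  rw [binPMF_div_binPMF ha.2, binPMF_div_binPMF hb.2]
  exact sigmaRatio_strictMonoOn h0 h1 h2 n ⟨Nat.zero_le a, ha.2⟩ ⟨Nat.zero_le b, hb.2⟩ hab

theorem stmt_3_general (p0 pa : ℝ) (n : ℕ) (h0 : 0 < p0) (h1 : p0 < pa) (h2 : pa < 1) :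
    StrictMonoOn (fun k : ℕ => tau1 k n pa p0) (Set.Icc 0 n) :=
  strictMonoOn_of_lt_add_one Set.ordConnected_Icc fun _ _ _ hk ↦
    tau1_lt_tau1_succ h0 h1 h2 hk.2

theorem stmt_3 (p0 pa : ℝ) (n : ℕ) (h0 : 0 < p0) (h1 : p0 < pa) (h2 : pa < 1)
    (hn : 0 < n) :
    StrictMonoOn (fun k : ℕ => tau1 k n pa p0) (Set.Icc 0 n) :=
  stmt_3_general p0 pa n h0 h1 h2
end

section
/- For any risk limit α ∈ (0,1) and 0 < p_0 < p_a < 1, if the End-of-Round BRAVO stopping condition holds at round j, i.e., σ(k_j, p_a, p_0, n_j) ≥ 1/α, then the PROVIDENCE stopping condition also holds at round j: σ(k_{j-1}, p_a, p_0, n_{j-1}) · τ_1(k_j - k_{j-1}, p_a, p_0, n_j - n_{j-1}) ≥ 1/α. (PROVIDENCE is at least as efficient as EoR BRAVO.) -/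
open Finset

/-!
The BRAVO ratio is multiplicative over rounds: `σ(k + k', n + n') = σ(k, n) σ(k', n')`.
Since `p0 < pa`, `σ(i, n)` is increasing in the number of winner ballots `i`, and
`binPMF n i pa = σ(i, n) · binPMF n i p0`; summing over `i ≥ k` gives `σ(k, n) ≤ τ₁(k, n)`.
Hence `1/α ≤ σ(k_j, n_j) = σ(k_{j-1}, n_{j-1}) σ(Δk, Δn) ≤ σ(k_{j-1}, n_{j-1}) τ₁(Δk, Δn)`.
-/

lemma sigmaRatio_eq (k n : ℕ) (pa p0 : ℝ) :
    sigmaRatio k n pa p0 = (pa / p0) ^ k * ((1 - pa) / (1 - p0)) ^ (n - k) := by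
  rw [sigmaRatio, mul_div_mul_comm, div_pow, div_pow]

lemma sigmaRatio_add {k n k' n' : ℕ} (hk : k ≤ n) (hk' : k' ≤ n') (pa p0 : ℝ) :
    sigmaRatio (k + k') (n + n') pa p0 = sigmaRatio k n pa p0 * sigmaRatio k' n' pa p0 := by
  have hn : n + n' - (k + k') = (n - k) + (n' - k') := by omega
  simp only [sigmaRatio_eq, hn, pow_add]
  ring

lemma sigmaRatio_nonneg (k n : ℕ) {pa p0 : ℝ} (hpa0 : 0 ≤ pa) (hpa1 : pa ≤ 1)
    (hp00 : 0 ≤ p0) (hp01 : p0 ≤ 1) : 0 ≤ sigmaRatio k n pa p0 := by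
  rw [sigmaRatio_eq]
  have : 0 ≤ 1 - pa := by linarith
  have : 0 ≤ 1 - p0 := by linarith
  positivity

lemma sigmaRatio_mono {k i : ℕ} (hki : k ≤ i) (n : ℕ) {pa p0 : ℝ}
    (h0 : 0 < p0) (h1 : p0 ≤ pa) (h2 : pa ≤ 1) :
    sigmaRatio k n pa p0 ≤ sigmaRatio i n pa p0 := by
  have hq : 1 ≤ pa / p0 := (one_le_div h0).2 h1
  have hr0 : 0 ≤ (1 - pa) / (1 - p0) := div_nonneg (by linarith) (by linarith)
  have hr1 : (1 - pa) / (1 - p0) ≤ 1 := div_le_one_of_le₀ (by linarith) (by linarith)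
  rw [sigmaRatio_eq, sigmaRatio_eq]
  gcongr ?_ * ?_
  · exact pow_le_pow_right₀ hq hki
  · exact pow_le_pow_of_le_one hr0 hr1 (by omega)

lemma binPMF_eq_sigmaRatio_mul (n i : ℕ) {pa p0 : ℝ} (h0 : p0 ≠ 0) (h1 : p0 ≠ 1) :
    binPMF n i pa = sigmaRatio i n pa p0 * binPMF n i p0 := by
  have : 1 - p0 ≠ 0 := sub_ne_zero.2 h1.symm
  unfold binPMF sigmaRatio
  field_simp

lemma binTail_pos {k n : ℕ} (hkn : k ≤ n) {p : ℝ} (h0 : 0 < p) (h1 : p < 1) :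
    0 < binTail k n p := by
  have h1' : 0 < 1 - p := by linarith
  refine Finset.sum_pos' (fun i _ => by unfold binPMF; positivity) ⟨k, by simp [hkn], ?_⟩
  have := Nat.choose_pos hkn
  unfold binPMF
  positivity

lemma sigmaRatio_le_tau1 {k n : ℕ} (hkn : k ≤ n) {pa p0 : ℝ}
    (h0 : 0 < p0) (h1 : p0 ≤ pa) (h2 : pa < 1) :
    sigmaRatio k n pa p0 ≤ tau1 k n pa p0 := by
  rw [tau1, le_div_iff₀ (binTail_pos hkn h0 (by linarith)), binTail, Finset.mul_sum]
  refine Finset.sum_le_sum fun i hi => ?_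
  rw [binPMF_eq_sigmaRatio_mul n i (pa := pa) h0.ne' (by linarith)]
  have : 0 ≤ 1 - p0 := by linarith
  refine mul_le_mul_of_nonneg_right (sigmaRatio_mono (Finset.mem_Icc.1 hi).1 n h0 h1 h2.le) ?_
  unfold binPMF
  positivity

theorem stmt_7_general (p0 pa α : ℝ) (kprev kj nprev nj : ℕ)
    (h0 : 0 < p0) (h1 : p0 < pa) (h2 : pa < 1)
    (hkk : kprev ≤ kj) (hnn : nprev ≤ nj)
    (hkprev : kprev ≤ nprev) (hmarg : kj - kprev ≤ nj - nprev)
    (hEoR : sigmaRatio kj nj pa p0 ≥ 1 / α) :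
    sigmaRatio kprev nprev pa p0 * tau1 (kj - kprev) (nj - nprev) pa p0 ≥ 1 / α := by
  calc 1 / α ≤ sigmaRatio kj nj pa p0 := hEoR
    _ = sigmaRatio kprev nprev pa p0 * sigmaRatio (kj - kprev) (nj - nprev) pa p0 := by
        rw [← sigmaRatio_add hkprev hmarg, Nat.add_sub_cancel' hkk, Nat.add_sub_cancel' hnn]
    _ ≤ sigmaRatio kprev nprev pa p0 * tau1 (kj - kprev) (nj - nprev) pa p0 := by
        gcongr
        · exact sigmaRatio_nonneg _ _ (by linarith) h2.le h0.le (by linarith)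
        · exact sigmaRatio_le_tau1 hmarg h0 h1.le h2

theorem stmt_7 (p0 pa α : ℝ) (kprev kj nprev nj : ℕ)
    (h0 : 0 < p0) (h1 : p0 < pa) (h2 : pa < 1)
    (hα0 : 0 < α) (hα1 : α < 1)
    (hkk : kprev ≤ kj) (hnn : nprev ≤ nj)
    (hkprev : kprev ≤ nprev) (hmarg : kj - kprev ≤ nj - nprev)
    (hEoR : sigmaRatio kj nj pa p0 ≥ 1 / α) :
    sigmaRatio kprev nprev pa p0 * tau1 (kj - kprev) (nj - nprev) pa p0 ≥ 1 / α :=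
  stmt_7_general p0 pa α kprev kj nprev nj h0 h1 h2 hkk hnn hkprev hmarg hEoR
end
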